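/- Under Assumption 2 and one DGT step with stepsize α > 0, the iterates satisfy ‖σ_{k+1} − 𝒥σ_{k+1}‖ ≤ (ρ + αL₁L₃)‖σ_k − 𝒥σ_k‖ + αL₁L₃(1 + L₃)‖x_k − x*‖ + αL₃²‖y_k − 𝒥y_k‖, where ρ := ‖A − J‖. -/

import Mathlib

noncomputable section
open scoped BigOperators

/-- The stacked decision space `ℝⁿ = ℝ^{n₁} × ⋯ × ℝ^{n_N}` with the stacked Euclidean norm
`‖x‖² = Σᵢ ‖xᵢ‖²`. -/
abbrev StackedX (N : ℕ) (nn : Fin N → ℕ) :=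
  PiLp 2 (fun i => EuclideanSpace ℝ (Fin (nn i)))

/-- The stacked aggregate space `ℝ^{Nd}` with the stacked Euclidean norm. -/
abbrev StackedY (N d : ℕ) := PiLp 2 (fun _ : Fin N => EuclideanSpace ℝ (Fin d))

/-- The averaging operator `𝒥 z = 1_N ⊗ ((1/N) Σᵢ zᵢ)`. -/
def Jmap {N d : ℕ} (z : StackedY N d) : StackedY N d :=
  WithLp.toLp 2 (fun _ => (N : ℝ)⁻¹ • ∑ j, z j)

/-- The ℓ₂-operator (spectral) norm of a real matrix. -/
def matrixL2OpNorm {N : ℕ} (M : Matrix (Fin N) (Fin N) ℝ) : ℝ :=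
  ‖LinearMap.toContinuousLinearMap (Matrix.toEuclideanLin M)‖

/-- The averaging matrix `J = (1/N) 1_N 1_Nᵀ`. -/
def consensusJ (N : ℕ) : Matrix (Fin N) (Fin N) ℝ := Matrix.of fun _ _ => (N : ℝ)⁻¹

/-- The stacked map `(x,y) ↦ ∇₁f(x,y) + ∇φ(x)(1_N ⊗ (1/N)Σᵢ ∇₂fᵢ(xᵢ,yᵢ))`, where `∇φᵢ(xᵢ)`
acts as the adjoint (transposed Jacobian) of the derivative of `φᵢ`. -/
def combinedGrad {N d : ℕ} {nn : Fin N → ℕ}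
    (φ : ∀ i, EuclideanSpace ℝ (Fin (nn i)) → EuclideanSpace ℝ (Fin d))
    (g1 : ∀ i, EuclideanSpace ℝ (Fin (nn i)) → EuclideanSpace ℝ (Fin d) →
      EuclideanSpace ℝ (Fin (nn i)))
    (g2 : ∀ i, EuclideanSpace ℝ (Fin (nn i)) → EuclideanSpace ℝ (Fin d) →
      EuclideanSpace ℝ (Fin d))
    (x : StackedX N nn) (y : StackedY N d) : StackedX N nn :=
  WithLp.toLp 2 (fun i => g1 i (x i) (y i) +
    ContinuousLinearMap.adjoint (fderiv ℝ (φ i) (x i)) ((N : ℝ)⁻¹ • ∑ j, g2 j (x j) (y j)))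

/-- The stacked map `(x,y) ↦ ∇₂f(x,y) = col(∇₂f₁(x₁,y₁),…,∇₂f_N(x_N,y_N))`. -/
def stackedGrad2 {N d : ℕ} {nn : Fin N → ℕ}
    (g2 : ∀ i, EuclideanSpace ℝ (Fin (nn i)) → EuclideanSpace ℝ (Fin d) →
      EuclideanSpace ℝ (Fin d))
    (x : StackedX N nn) (y : StackedY N d) : StackedY N d :=
  WithLp.toLp 2 (fun i => g2 i (x i) (y i))

/-! Write `σ' = (A ⊗ I)σ + Δ` with `Δᵢ = φᵢ(x'ᵢ) - φᵢ(xᵢ)`. Since `A` is doubly stochastic,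
`σ' - 𝒥σ' = ((A - J) ⊗ I)(σ - 𝒥σ) + (Δ - 𝒥Δ)`, so the consensus error contracts by `ρ` up to
`‖Δ‖ ≤ L₃‖x' - x‖` (mean value inequality). By gradient tracking, `(x - x')/α` is `G(x, σ)` plus
`∇φ(x)(y - 𝒥y)`, where `G` is the map of Assumption 2. The chain rule gives
`∇f(x) = G(x, 1 ⊗ σ(x))`, so `G(x*, 1 ⊗ σ(x*)) = 0`; as `𝒥σ = 1 ⊗ σ(x)` and `x ↦ 1 ⊗ σ(x)` is
`L₃`-Lipschitz, `‖G(x, σ)‖ ≤ L₁((1 + L₃)‖x - x*‖ + ‖σ - 𝒥σ‖)`. -/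

open Finset
open scoped InnerProductSpace

section PiLp

variable {ι : Type*} [Fintype ι]

lemma PiLp.norm_le_mul_of_forall_norm_le {E G : ι → Type*} [∀ i, SeminormedAddCommGroup (E i)]
    [∀ i, SeminormedAddCommGroup (G i)] {u : PiLp 2 E} {v : PiLp 2 G} {C : ℝ} (hC : 0 ≤ C)
    (h : ∀ i, ‖u i‖ ≤ C * ‖v i‖) : ‖u‖ ≤ C * ‖v‖ := by
  refine le_of_pow_le_pow_left₀ two_ne_zero (by positivity) ?_
  rw [PiLp.norm_sq_eq_of_L2, mul_pow, PiLp.norm_sq_eq_of_L2, mul_sum]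
  gcongr with i
  rw [← mul_pow]
  exact pow_le_pow_left₀ (norm_nonneg _) (h i) 2

lemma PiLp.sq_sum_norm_le_card_mul_norm_sq {E : ι → Type*} [∀ i, SeminormedAddCommGroup (E i)]
    (x : PiLp 2 E) : (∑ i, ‖x i‖) ^ 2 ≤ Fintype.card ι * ‖x‖ ^ 2 := by
  rw [PiLp.norm_sq_eq_of_L2]
  exact sq_sum_le_card_mul_sum_sq

lemma PiLp.norm_sq_toLp_const {E : Type*} [SeminormedAddCommGroup E] (v : E) :
    ‖WithLp.toLp 2 (fun _ : ι => v)‖ ^ 2 = Fintype.card ι * ‖v‖ ^ 2 := by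
  simp [PiLp.norm_sq_eq_of_L2]

end PiLp

section Consensus

variable {N d : ℕ}

def blockMulVec (M : Matrix (Fin N) (Fin N) ℝ) (z : StackedY N d) : StackedY N d :=
  WithLp.toLp 2 (fun i => ∑ j, M i j • z j)

@[simp]
lemma blockMulVec_apply (M : Matrix (Fin N) (Fin N) ℝ) (z : StackedY N d) (i : Fin N) :
    blockMulVec M z i = ∑ j, M i j • z j := rfl

@[simp]
lemma Jmap_apply (z : StackedY N d) (i : Fin N) : Jmap z i = (N : ℝ)⁻¹ • ∑ j, z j := rfl

lemma blockMulVec_sub (M : Matrix (Fin N) (Fin N) ℝ) (u v : StackedY N d) :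
    blockMulVec M (u - v) = blockMulVec M u - blockMulVec M v := by
  ext1 i; simp [smul_sub, sum_sub_distrib]

lemma sub_blockMulVec (M M' : Matrix (Fin N) (Fin N) ℝ) (z : StackedY N d) :
    blockMulVec (M - M') z = blockMulVec M z - blockMulVec M' z := by
  ext1 i; simp [sub_smul, sum_sub_distrib]

lemma blockMulVec_consensusJ (z : StackedY N d) : blockMulVec (consensusJ N) z = Jmap z := by
  ext1 i; simp [consensusJ, smul_sum]

lemma Jmap_add (u v : StackedY N d) : Jmap (u + v) = Jmap u + Jmap v := by
  ext1 i; simp [sum_add_distrib]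

lemma sum_Jmap (z : StackedY N d) : ∑ i, Jmap z i = ∑ i, z i := by
  rcases N.eq_zero_or_pos with rfl | hN
  · simp
  · rw [funext (Jmap_apply z), sum_const, card_univ, Fintype.card_fin,
      ← Nat.cast_smul_eq_nsmul ℝ, smul_smul, mul_inv_cancel₀ (Nat.cast_ne_zero.mpr hN.ne'),
      one_smul]

lemma Jmap_Jmap (z : StackedY N d) : Jmap (Jmap z) = Jmap z := by
  ext1 i; rw [Jmap_apply, sum_Jmap, Jmap_apply]

lemma blockMulVec_Jmap {A : Matrix (Fin N) (Fin N) ℝ} (hrow : ∀ i, ∑ j, A i j = 1)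
    (z : StackedY N d) : blockMulVec A (Jmap z) = Jmap z := by
  ext1 i; simp only [blockMulVec_apply, Jmap_apply, ← sum_smul, hrow, one_smul]

lemma Jmap_blockMulVec {A : Matrix (Fin N) (Fin N) ℝ} (hcol : ∀ j, ∑ i, A i j = 1)
    (z : StackedY N d) : Jmap (blockMulVec A z) = Jmap z := by
  ext1 i; simp only [Jmap_apply, blockMulVec_apply]
  rw [sum_comm]; simp only [← sum_smul, hcol, one_smul]

lemma blockMulVec_sub_consensusJ {A : Matrix (Fin N) (Fin N) ℝ} (hrow : ∀ i, ∑ j, A i j = 1)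
    (z : StackedY N d) :
    blockMulVec (A - consensusJ N) (z - Jmap z) = blockMulVec A z - Jmap z := by
  rw [blockMulVec_sub, sub_blockMulVec, sub_blockMulVec, blockMulVec_consensusJ,
    blockMulVec_consensusJ, blockMulVec_Jmap hrow, Jmap_Jmap, sub_self, sub_zero]

lemma inner_sub_Jmap_Jmap (z : StackedY N d) : ⟪z - Jmap z, Jmap z⟫_ℝ = 0 := by
  set m : EuclideanSpace ℝ (Fin d) := (N : ℝ)⁻¹ • ∑ j, z j
  calc ⟪z - Jmap z, Jmap z⟫_ℝ = ∑ i, ⟪z i - Jmap z i, m⟫_ℝ := PiLp.inner_apply _ _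
    _ = 0 := by rw [← sum_inner, sum_sub_distrib, sum_Jmap, sub_self, inner_zero_left]

lemma norm_sub_Jmap_le (z : StackedY N d) : ‖z - Jmap z‖ ≤ ‖z‖ := by
  have h := norm_add_sq_eq_norm_sq_add_norm_sq_real (inner_sub_Jmap_Jmap z)
  rw [sub_add_cancel] at h
  exact le_of_pow_le_pow_left₀ two_ne_zero (norm_nonneg _) (by nlinarith [sq_nonneg ‖Jmap z‖])

def stackedColumn (z : StackedY N d) (c : Fin d) : EuclideanSpace ℝ (Fin N) :=
  WithLp.toLp 2 (fun j => z j c)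

lemma norm_sq_eq_sum_norm_sq_stackedColumn (z : StackedY N d) :
    ‖z‖ ^ 2 = ∑ c, ‖stackedColumn z c‖ ^ 2 := by
  simp only [PiLp.norm_sq_eq_of_L2]
  exact sum_comm

lemma stackedColumn_blockMulVec (M : Matrix (Fin N) (Fin N) ℝ) (z : StackedY N d) (c : Fin d) :
    stackedColumn (blockMulVec M z) c = Matrix.toEuclideanLin M (stackedColumn z c) := by
  ext1 i
  simp [stackedColumn, Matrix.mulVec, dotProduct]

lemma norm_blockMulVec_le (M : Matrix (Fin N) (Fin N) ℝ) (z : StackedY N d) :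
    ‖blockMulVec M z‖ ≤ matrixL2OpNorm M * ‖z‖ := by
  set T := LinearMap.toContinuousLinearMap (Matrix.toEuclideanLin M)
  refine le_of_pow_le_pow_left₀ two_ne_zero (mul_nonneg (norm_nonneg T) (norm_nonneg _)) ?_
  rw [norm_sq_eq_sum_norm_sq_stackedColumn, mul_pow, norm_sq_eq_sum_norm_sq_stackedColumn,
    mul_sum]
  gcongr with c
  rw [stackedColumn_blockMulVec, ← mul_pow]
  exact pow_le_pow_left₀ (norm_nonneg _) (T.le_opNorm _) 2

theorem norm_sub_Jmap_le_of_eq_blockMulVec_add {A : Matrix (Fin N) (Fin N) ℝ}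
    (hrow : ∀ i, ∑ j, A i j = 1) (hcol : ∀ j, ∑ i, A i j = 1) {σ σ' Δ : StackedY N d}
    (h : σ' = blockMulVec A σ + Δ) :
    ‖σ' - Jmap σ'‖ ≤ matrixL2OpNorm (A - consensusJ N) * ‖σ - Jmap σ‖ + ‖Δ‖ := by
  have hsplit : σ' - Jmap σ' = blockMulVec (A - consensusJ N) (σ - Jmap σ) + (Δ - Jmap Δ) := by
    rw [h, Jmap_add, Jmap_blockMulVec hcol, blockMulVec_sub_consensusJ hrow]
    abel
  rw [hsplit]
  exact (norm_add_le _ _).trans (add_le_add (norm_blockMulVec_le _ _) (norm_sub_Jmap_le _))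

end Consensus

lemma IsLocalMin.hasGradientAt_eq_zero {F : Type*} [NormedAddCommGroup F]
    [InnerProductSpace ℝ F] [CompleteSpace F] {f : F → ℝ} {a f' : F} (h : IsLocalMin f a)
    (hf : HasGradientAt f f' a) : f' = 0 :=
  (InnerProductSpace.toDual ℝ F).map_eq_zero_iff.mp (h.hasFDerivAt_eq_zero hf.hasFDerivAt)

lemma fderiv_uncurry_apply_eq_inner_gradient {E G : Type*} [NormedAddCommGroup E]
    [InnerProductSpace ℝ E] [CompleteSpace E] [NormedAddCommGroup G] [InnerProductSpace ℝ G]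
    [CompleteSpace G] {f : E → G → ℝ} {a : E} {b : G}
    (hf : DifferentiableAt ℝ (fun p : E × G => f p.1 p.2) (a, b)) (u : E) (v : G) :
    fderiv ℝ (fun p : E × G => f p.1 p.2) (a, b) (u, v) =
      ⟪gradient (fun z => f z b) a, u⟫_ℝ + ⟪gradient (f a) b, v⟫_ℝ := by
  set D := fderiv ℝ (fun p : E × G => f p.1 p.2) (a, b)
  have h₁ : HasFDerivAt (fun z => f z b) (D.comp (ContinuousLinearMap.inl ℝ E G)) a :=
    (hf.hasFDerivAt.comp a (hasFDerivAt_prodMk_left (𝕜 := ℝ) a b) :)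
  have h₂ : HasFDerivAt (f a) (D.comp (ContinuousLinearMap.inr ℝ E G)) b :=
    (hf.hasFDerivAt.comp b (hasFDerivAt_prodMk_right (𝕜 := ℝ) a b) :)
  rw [h₁.hasGradientAt.gradient, h₂.hasGradientAt.gradient, InnerProductSpace.toDual_symm_apply,
    InnerProductSpace.toDual_symm_apply, ContinuousLinearMap.comp_apply,
    ContinuousLinearMap.comp_apply, ← map_add]
  simp

section Objective

variable {N d : ℕ} {nn : Fin N → ℕ}

def aggregate (φ : ∀ i, EuclideanSpace ℝ (Fin (nn i)) → EuclideanSpace ℝ (Fin d))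
    (x : StackedX N nn) : EuclideanSpace ℝ (Fin d) :=
  (N : ℝ)⁻¹ • ∑ j, φ j (x j)

variable {φ : ∀ i, EuclideanSpace ℝ (Fin (nn i)) → EuclideanSpace ℝ (Fin d)}
  {g1 : ∀ i, EuclideanSpace ℝ (Fin (nn i)) → EuclideanSpace ℝ (Fin d) →
    EuclideanSpace ℝ (Fin (nn i))}
  {g2 : ∀ i, EuclideanSpace ℝ (Fin (nn i)) → EuclideanSpace ℝ (Fin d) →
    EuclideanSpace ℝ (Fin d)}

lemma hasFDerivAt_aggregate (hφ : ∀ i, Differentiable ℝ (φ i)) (x : StackedX N nn) :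
    HasFDerivAt (aggregate φ)
      ((N : ℝ)⁻¹ • ∑ j, (fderiv ℝ (φ j) (x j)).comp (PiLp.proj 2 _ j)) x :=
  (HasFDerivAt.fun_sum fun j _ =>
    (hφ j (x j)).hasFDerivAt.comp x (PiLp.hasFDerivAt_apply 2 x j)).fun_const_smul _

theorem hasGradientAt_of_eq_sum_aggregate
    {f : ∀ i, EuclideanSpace ℝ (Fin (nn i)) → EuclideanSpace ℝ (Fin d) → ℝ}
    {F : StackedX N nn → ℝ} (hφ : ∀ i, Differentiable ℝ (φ i))
    (hf : ∀ i, Differentiable ℝ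
      (fun p : EuclideanSpace ℝ (Fin (nn i)) × EuclideanSpace ℝ (Fin d) => f i p.1 p.2))
    (hg1 : ∀ i u s, g1 i u s = gradient (fun z => f i z s) u)
    (hg2 : ∀ i u s, g2 i u s = gradient (f i u) s)
    (hF : ∀ x, F x = ∑ i, f i (x i) (aggregate φ x)) (x : StackedX N nn) :
    HasGradientAt F (combinedGrad φ g1 g2 x (WithLp.toLp 2 fun _ => aggregate φ x)) x := by
  set σ := aggregate φ x
  set S := (N : ℝ)⁻¹ • ∑ j, (fderiv ℝ (φ j) (x j)).comp (PiLp.proj 2 _ j)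
  set D := fun i => fderiv ℝ
    (fun p : EuclideanSpace ℝ (Fin (nn i)) × EuclideanSpace ℝ (Fin d) => f i p.1 p.2) (x i, σ)
  have hFd : HasFDerivAt F (∑ i, (D i).comp ((PiLp.proj 2 _ i).prod S)) x := by
    refine (HasFDerivAt.fun_sum fun i _ => ?_).congr_of_eventuallyEq
      (Filter.Eventually.of_forall hF)
    exact (hf i (x i, σ)).hasFDerivAt.comp x
      ((PiLp.hasFDerivAt_apply 2 x i).prodMk (hasFDerivAt_aggregate hφ x))
  refine hasGradientAt_iff_hasFDerivAt.mpr (hFd.congr_fderiv ?_)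
  ext1 v
  set w := (N : ℝ)⁻¹ • ∑ j, g2 j (x j) σ
  have hSv : S v = (N : ℝ)⁻¹ • ∑ j, fderiv ℝ (φ j) (x j) (v j) := by simp [S]
  have hsplit : ∀ i, D i (v i, S v) = ⟪g1 i (x i) σ, v i⟫_ℝ + ⟪g2 i (x i) σ, S v⟫_ℝ := by
    intro i
    rw [fderiv_uncurry_apply_eq_inner_gradient (hf i _), hg1, hg2]
  have hchain : ∑ i, ⟪g2 i (x i) σ, S v⟫_ℝ = ∑ j, ⟪w, fderiv ℝ (φ j) (x j) (v j)⟫_ℝ := by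
    rw [← sum_inner, hSv, real_inner_smul_right, ← real_inner_smul_left, inner_sum]
  rw [InnerProductSpace.toDual_apply_apply, PiLp.inner_apply]
  simp only [_root_.sum_apply, ContinuousLinearMap.comp_apply, ContinuousLinearMap.prod_apply,
    PiLp.proj_apply, hsplit, sum_add_distrib, hchain, combinedGrad, WithLp.ofLp_toLp,
    inner_add_left, ContinuousLinearMap.adjoint_inner_left]
  rfl

lemma norm_toLp_aggregate_sub_le {L : ℝ} (hL : 0 ≤ L)
    (hφ : ∀ j a b, ‖φ j b - φ j a‖ ≤ L * ‖b - a‖) (x x' : StackedX N nn) :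
    ‖(WithLp.toLp 2 fun _ : Fin N => aggregate φ x) - WithLp.toLp 2 fun _ => aggregate φ x'‖ ≤
      L * ‖x - x'‖ := by
  set s := ∑ j, ‖(x - x') j‖
  have hs : s ^ 2 ≤ N * ‖x - x'‖ ^ 2 := by
    have h := PiLp.sq_sum_norm_le_card_mul_norm_sq (x - x')
    rwa [Fintype.card_fin] at h
  have hdiff : ‖aggregate φ x - aggregate φ x'‖ ≤ (N : ℝ)⁻¹ * (L * s) := by
    rw [aggregate, aggregate, ← smul_sub, ← sum_sub_distrib, norm_smul,
      Real.norm_of_nonneg (by positivity), mul_sum]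
    gcongr
    exact (norm_sum_le _ _).trans (sum_le_sum fun j _ => hφ j _ _)
  have hconst : ((WithLp.toLp 2 fun _ : Fin N => aggregate φ x) - WithLp.toLp 2 fun _ =>
      aggregate φ x') = WithLp.toLp 2 fun _ : Fin N => aggregate φ x - aggregate φ x' := rfl
  refine le_of_pow_le_pow_left₀ two_ne_zero (by positivity) ?_
  calc _ = N * ‖aggregate φ x - aggregate φ x'‖ ^ 2 := by
        rw [hconst, PiLp.norm_sq_toLp_const, Fintype.card_fin]
    _ ≤ N * ((N : ℝ)⁻¹ * (L * s)) ^ 2 := by gcongr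
    _ = (N * (N : ℝ)⁻¹) * (N : ℝ)⁻¹ * L ^ 2 * s ^ 2 := by ring
    _ ≤ 1 * (N : ℝ)⁻¹ * L ^ 2 * (N * ‖x - x'‖ ^ 2) := by gcongr; exact mul_inv_le_one
    _ = ((N : ℝ)⁻¹ * N) * (L * ‖x - x'‖) ^ 2 := by ring
    _ ≤ (L * ‖x - x'‖) ^ 2 := mul_le_of_le_one_left (sq_nonneg _) inv_mul_le_one

lemma norm_combinedGrad_le {L₁ L₃ : ℝ} (hL₁ : 0 ≤ L₁) (hL₃ : 0 ≤ L₃)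
    (hGlip : ∀ (x x' : StackedX N nn) (y y' : StackedY N d),
      ‖combinedGrad φ g1 g2 x y - combinedGrad φ g1 g2 x' y'‖ ≤ L₁ * (‖x - x'‖ + ‖y - y'‖))
    (hφ : ∀ j a b, ‖φ j b - φ j a‖ ≤ L₃ * ‖b - a‖) {xstar x : StackedX N nn}
    (hzero : combinedGrad φ g1 g2 xstar (WithLp.toLp 2 fun _ => aggregate φ xstar) = 0)
    {σ : StackedY N d} (hσ : Jmap σ = WithLp.toLp 2 fun _ => aggregate φ x) :
    ‖combinedGrad φ g1 g2 x σ‖ ≤ L₁ * ((1 + L₃) * ‖x - xstar‖ + ‖σ - Jmap σ‖) := by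
  set σstar : StackedY N d := WithLp.toLp 2 fun _ => aggregate φ xstar
  have hσσstar : ‖σ - σstar‖ ≤ ‖σ - Jmap σ‖ + L₃ * ‖x - xstar‖ := by
    refine (norm_sub_le_norm_sub_add_norm_sub σ (Jmap σ) σstar).trans ?_
    rw [hσ]
    gcongr
    exact norm_toLp_aggregate_sub_le hL₃ hφ x xstar
  calc ‖combinedGrad φ g1 g2 x σ‖
      = ‖combinedGrad φ g1 g2 x σ - combinedGrad φ g1 g2 xstar σstar‖ := by rw [hzero, sub_zero]
    _ ≤ L₁ * (‖x - xstar‖ + ‖σ - σstar‖) := hGlip _ _ _ _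
    _ ≤ L₁ * (‖x - xstar‖ + (‖σ - Jmap σ‖ + L₃ * ‖x - xstar‖)) := by gcongr
    _ = L₁ * ((1 + L₃) * ‖x - xstar‖ + ‖σ - Jmap σ‖) := by ring

lemma norm_sub_le_of_dgt_update {α L₃ : ℝ} (hα : 0 ≤ α) (hL₃ : 0 ≤ L₃)
    (hφbound : ∀ i xi, ‖fderiv ℝ (φ i) xi‖ ≤ L₃) {x x' : StackedX N nn} {σ y : StackedY N d}
    (htracky : (N : ℝ)⁻¹ • ∑ i, y i = (N : ℝ)⁻¹ • ∑ i, g2 i (x i) (σ i))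
    (hxup : ∀ i, x' i = x i - α • (g1 i (x i) (σ i) +
      ContinuousLinearMap.adjoint (fderiv ℝ (φ i) (x i)) (y i))) :
    ‖x' - x‖ ≤ α * (‖combinedGrad φ g1 g2 x σ‖ + L₃ * ‖y - Jmap y‖) := by
  set E : StackedX N nn :=
    WithLp.toLp 2 fun i => ContinuousLinearMap.adjoint (fderiv ℝ (φ i) (x i)) ((y - Jmap y) i)
  have hdir : ∀ i, (combinedGrad φ g1 g2 x σ + E) i =
      g1 i (x i) (σ i) + ContinuousLinearMap.adjoint (fderiv ℝ (φ i) (x i)) (y i) := by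
    intro i
    change g1 i (x i) (σ i) + ContinuousLinearMap.adjoint (fderiv ℝ (φ i) (x i))
        ((N : ℝ)⁻¹ • ∑ j, g2 j (x j) (σ j)) +
      ContinuousLinearMap.adjoint (fderiv ℝ (φ i) (x i)) (y i - (N : ℝ)⁻¹ • ∑ j, y j) = _
    rw [htracky, map_sub, add_assoc, add_sub_cancel]
  have hstep : x' - x = -(α • (combinedGrad φ g1 g2 x σ + E)) := by
    ext1 i
    rw [PiLp.sub_apply, hxup, PiLp.neg_apply, PiLp.smul_apply, hdir]
    abel
  have hE : ‖E‖ ≤ L₃ * ‖y - Jmap y‖ := by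
    refine PiLp.norm_le_mul_of_forall_norm_le hL₃ fun i => ?_
    refine (ContinuousLinearMap.le_opNorm _ _).trans ?_
    rw [ContinuousLinearMap.adjoint.norm_map]
    gcongr
    exact hφbound i (x i)
  calc ‖x' - x‖ = α * ‖combinedGrad φ g1 g2 x σ + E‖ := by
        rw [hstep, norm_neg, norm_smul, Real.norm_of_nonneg hα]
    _ ≤ α * (‖combinedGrad φ g1 g2 x σ‖ + L₃ * ‖y - Jmap y‖) :=
        mul_le_mul_of_nonneg_left ((norm_add_le _ _).trans (add_le_add le_rfl hE)) hα

end Objective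

theorem dgt_onestep_sigma_consensus_bound_general (N d : ℕ) (nn : Fin N → ℕ)
    (φ : ∀ i, EuclideanSpace ℝ (Fin (nn i)) → EuclideanSpace ℝ (Fin d))
    (f : ∀ i, EuclideanSpace ℝ (Fin (nn i)) → EuclideanSpace ℝ (Fin d) → ℝ)
    (hφdiff : ∀ i, Differentiable ℝ (φ i))
    (hfdiff : ∀ i, Differentiable ℝ
      (fun p : EuclideanSpace ℝ (Fin (nn i)) × EuclideanSpace ℝ (Fin d) => f i p.1 p.2))
    -- the partial gradients ∇₁fᵢ and ∇₂fᵢ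
    (g1 : ∀ i, EuclideanSpace ℝ (Fin (nn i)) → EuclideanSpace ℝ (Fin d) →
      EuclideanSpace ℝ (Fin (nn i)))
    (g2 : ∀ i, EuclideanSpace ℝ (Fin (nn i)) → EuclideanSpace ℝ (Fin d) →
      EuclideanSpace ℝ (Fin d))
    (hg1 : ∀ i u s, g1 i u s = gradient (fun z => f i z s) u)
    (hg2 : ∀ i u s, g2 i u s = gradient (f i u) s)
    -- the global objective f(x) = Σᵢ fᵢ(xᵢ, σ(x)) with σ(x) = (1/N)Σᵢ φᵢ(xᵢ)
    (F : StackedX N nn → ℝ)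
    (hF : ∀ x : StackedX N nn, F x = ∑ i, f i (x i) ((N : ℝ)⁻¹ • ∑ j, φ j (x j)))
    -- Assumption 2
    (L₁ L₃ : ℝ) (hL₁ : 0 < L₁) (hL₃ : 0 < L₃)
    (hGlip : ∀ (x x' : StackedX N nn) (y y' : StackedY N d),
      ‖combinedGrad φ g1 g2 x y - combinedGrad φ g1 g2 x' y'‖ ≤ L₁ * (‖x - x'‖ + ‖y - y'‖))
    (hφbound : ∀ (i : Fin N) (xi : EuclideanSpace ℝ (Fin (nn i))), ‖fderiv ℝ (φ i) xi‖ ≤ L₃)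
    -- the weight matrix
    (A : Matrix (Fin N) (Fin N) ℝ)
    (hrow : ∀ i, ∑ j, A i j = 1) (hcol : ∀ j, ∑ i, A i j = 1)
    -- the minimizer of F
    (xstar : StackedX N nn) (hmin : ∀ z, F xstar ≤ F z)
    -- one DGT step
    (α : ℝ) (hα0 : 0 < α)
    (xk xk1 : StackedX N nn) (σk σk1 yk : StackedY N d)
    (htrackσ : (N : ℝ)⁻¹ • ∑ i, σk i = (N : ℝ)⁻¹ • ∑ i, φ i (xk i))
    (htracky : (N : ℝ)⁻¹ • ∑ i, yk i = (N : ℝ)⁻¹ • ∑ i, g2 i (xk i) (σk i))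
    (hxup : ∀ i, xk1 i = xk i - α • (g1 i (xk i) (σk i) +
      ContinuousLinearMap.adjoint (fderiv ℝ (φ i) (xk i)) (yk i)))
    (hσup : ∀ i, σk1 i = ∑ j, A i j • σk j + φ i (xk1 i) - φ i (xk i)) :
    ‖σk1 - Jmap σk1‖ ≤ (matrixL2OpNorm (A - consensusJ N) + α * L₁ * L₃) * ‖σk - Jmap σk‖ +
      α * L₁ * L₃ * (1 + L₃) * ‖xk - xstar‖ + α * L₃ ^ 2 * ‖yk - Jmap yk‖ := by
  have hφlip : ∀ i a b, ‖φ i b - φ i a‖ ≤ L₃ * ‖b - a‖ := fun i _ _ =>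
    convex_univ.norm_image_sub_le_of_norm_fderiv_le (fun z _ => hφdiff i z)
      (fun z _ => hφbound i z) trivial trivial
  have hzero : combinedGrad φ g1 g2 xstar (WithLp.toLp 2 fun _ => aggregate φ xstar) = 0 :=
    IsLocalMin.hasGradientAt_eq_zero (Filter.Eventually.of_forall hmin)
      (hasGradientAt_of_eq_sum_aggregate hφdiff hfdiff hg1 hg2 hF xstar)
  have hJσ : Jmap σk = WithLp.toLp 2 fun _ => aggregate φ xk := by
    ext1
    exact htrackσ
  set Δ : StackedY N d := WithLp.toLp 2 fun i => φ i (xk1 i) - φ i (xk i)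
  have hσk1 : σk1 = blockMulVec A σk + Δ := by
    ext1 i
    rw [hσup, add_sub_assoc]
    rfl
  have hΔ : ‖Δ‖ ≤ L₃ * ‖xk1 - xk‖ :=
    PiLp.norm_le_mul_of_forall_norm_le hL₃.le fun i => hφlip i _ _
  have hcg := norm_combinedGrad_le hL₁.le hL₃.le hGlip hφlip hzero hJσ
  have hx := norm_sub_le_of_dgt_update hα0.le hL₃.le hφbound htracky hxup
  calc ‖σk1 - Jmap σk1‖
      ≤ matrixL2OpNorm (A - consensusJ N) * ‖σk - Jmap σk‖ + L₃ * ‖xk1 - xk‖ :=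
        (norm_sub_Jmap_le_of_eq_blockMulVec_add hrow hcol hσk1).trans (by gcongr)
    _ ≤ matrixL2OpNorm (A - consensusJ N) * ‖σk - Jmap σk‖ + L₃ * (α * (L₁ *
          ((1 + L₃) * ‖xk - xstar‖ + ‖σk - Jmap σk‖) + L₃ * ‖yk - Jmap yk‖)) := by
        gcongr
        exact hx.trans (by gcongr)
    _ = _ := by ring

/-- Under Assumption 2 and one DGT step with stepsize `α > 0`,
`‖σ_{k+1} - 𝒥σ_{k+1}‖ ≤ (ρ + αL₁L₃)‖σ_k - 𝒥σ_k‖ + αL₁L₃(1+L₃)‖x_k - x*‖ + αL₃²‖y_k - 𝒥y_k‖`,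
where `ρ = ‖A - J‖` is the ℓ₂-operator norm. -/
theorem dgt_onestep_sigma_consensus_bound (N d : ℕ) (hN : 0 < N) (nn : Fin N → ℕ)
    (φ : ∀ i, EuclideanSpace ℝ (Fin (nn i)) → EuclideanSpace ℝ (Fin d))
    (f : ∀ i, EuclideanSpace ℝ (Fin (nn i)) → EuclideanSpace ℝ (Fin d) → ℝ)
    (hφdiff : ∀ i, Differentiable ℝ (φ i))
    (hfdiff : ∀ i, Differentiable ℝ
      (fun p : EuclideanSpace ℝ (Fin (nn i)) × EuclideanSpace ℝ (Fin d) => f i p.1 p.2))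
    -- the partial gradients ∇₁fᵢ and ∇₂fᵢ
    (g1 : ∀ i, EuclideanSpace ℝ (Fin (nn i)) → EuclideanSpace ℝ (Fin d) →
      EuclideanSpace ℝ (Fin (nn i)))
    (g2 : ∀ i, EuclideanSpace ℝ (Fin (nn i)) → EuclideanSpace ℝ (Fin d) →
      EuclideanSpace ℝ (Fin d))
    (hg1 : ∀ i u s, g1 i u s = gradient (fun z => f i z s) u)
    (hg2 : ∀ i u s, g2 i u s = gradient (f i u) s)
    -- the global objective f(x) = Σᵢ fᵢ(xᵢ, σ(x)) with σ(x) = (1/N)Σᵢ φᵢ(xᵢ)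
    (F : StackedX N nn → ℝ)
    (hF : ∀ x : StackedX N nn, F x = ∑ i, f i (x i) ((N : ℝ)⁻¹ • ∑ j, φ j (x j)))
    -- Assumption 2
    (μ L₁ L₂ L₃ : ℝ) (hμ : 0 < μ) (hL₁ : 0 < L₁) (hL₂ : 0 < L₂) (hL₃ : 0 < L₃)
    (hFdiff : Differentiable ℝ F)
    (hsc : ∀ x y : StackedX N nn,
      F x ≥ F y + (inner ℝ (gradient F y) (x - y) : ℝ) + μ / 2 * ‖x - y‖ ^ 2)
    (hsmooth : ∀ x y : StackedX N nn, ‖gradient F x - gradient F y‖ ≤ L₁ * ‖x - y‖)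
    (hGlip : ∀ (x x' : StackedX N nn) (y y' : StackedY N d),
      ‖combinedGrad φ g1 g2 x y - combinedGrad φ g1 g2 x' y'‖ ≤ L₁ * (‖x - x'‖ + ‖y - y'‖))
    (hG2lip : ∀ (x x' : StackedX N nn) (y y' : StackedY N d),
      ‖stackedGrad2 g2 x y - stackedGrad2 g2 x' y'‖ ≤ L₂ * (‖x - x'‖ + ‖y - y'‖))
    (hφbound : ∀ (i : Fin N) (xi : EuclideanSpace ℝ (Fin (nn i))), ‖fderiv ℝ (φ i) xi‖ ≤ L₃)
    -- the weight matrix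
    (A : Matrix (Fin N) (Fin N) ℝ)
    (hA0 : ∀ i j, 0 ≤ A i j)
    (hrow : ∀ i, ∑ j, A i j = 1) (hcol : ∀ j, ∑ i, A i j = 1)
    -- the minimizer of F
    (xstar : StackedX N nn) (hmin : ∀ z, F xstar ≤ F z)
    -- one DGT step
    (α : ℝ) (hα0 : 0 < α)
    (xk xk1 : StackedX N nn) (σk σk1 yk yk1 : StackedY N d)
    (htrackσ : (N : ℝ)⁻¹ • ∑ i, σk i = (N : ℝ)⁻¹ • ∑ i, φ i (xk i))
    (htracky : (N : ℝ)⁻¹ • ∑ i, yk i = (N : ℝ)⁻¹ • ∑ i, g2 i (xk i) (σk i))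
    (hxup : ∀ i, xk1 i = xk i - α • (g1 i (xk i) (σk i) +
      ContinuousLinearMap.adjoint (fderiv ℝ (φ i) (xk i)) (yk i)))
    (hσup : ∀ i, σk1 i = ∑ j, A i j • σk j + φ i (xk1 i) - φ i (xk i))
    (hyup : ∀ i, yk1 i = ∑ j, A i j • yk j + g2 i (xk1 i) (σk1 i) - g2 i (xk i) (σk i)) :
    ‖σk1 - Jmap σk1‖ ≤ (matrixL2OpNorm (A - consensusJ N) + α * L₁ * L₃) * ‖σk - Jmap σk‖ +
      α * L₁ * L₃ * (1 + L₃) * ‖xk - xstar‖ + α * L₃ ^ 2 * ‖yk - Jmap yk‖ :=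
  dgt_onestep_sigma_consensus_bound_general N d nn φ f hφdiff hfdiff g1 g2 hg1 hg2 F hF L₁ L₃ hL₁
    hL₃ hGlip hφbound A hrow hcol xstar hmin α hα0 xk xk1 σk σk1 yk htrackσ htracky hxup hσup
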